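/- arXiv:1606.00815 — 3 statements merged into one kernel-verified Lean document; each statement's English description precedes it below -/
import Mathlib

section
/- Let q be a prime power with q ≡ 3 (mod 4), and write q = 2^A·m − 1 with m odd and A ≥ 2 (so 2^A exactly divides q+1). If n ≥ A, then over F_q the polynomial x^{2^n} + 1 factors as the product of 2^{A−1} irreducible trinomials: x^{2^n} + 1 = ∏_{δ ∈ Δ} (x^{2^{n−A+1}} + δ x^{2^{n−A}} − 1), where Δ ⊆ F_q is the set of roots in F_q of the Dickson polynomial D_{2^{A−1}}(x, −1), each factor is irreducible over F_q, and |Δ| = 2^{A−1}. -/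
/-!
Let `k = 2^(A-1)`. A root `z` of `X^(2k) + 1` in an algebraic closure satisfies
`z^(q+1) = (z^(2k))^m = -1`, so `z^q = -z⁻¹` and `δ = z⁻¹ - z` is fixed by the Frobenius,
i.e. `δ ∈ F_q`. Since `D_k(z⁻¹ + (-z), -1) = z^(-k) + z^k = 0`, `δ ∈ Δ`, and `z` is a root of
`X^2 + δX - 1`. Hence `X^(2k) + 1` divides `∏_{δ ∈ Δ} (X^2 + δX - 1)`, and as `|Δ| ≤ deg D_k = k`
the two monic polynomials coincide and `|Δ| = k`. Substituting `X ↦ X^(2^(n-A))` gives the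
factorization. An irreducible factor of `X^(2^n) + 1` of degree `d` has a root of order `2^(n+1)`
in `F_(q^d)`, so `2^(n+1) ∣ q^d - 1`; lifting the exponent, `v₂(q^d - 1) = A + v₂(d)` for even `d`
(and `= 1` for odd `d`), whence `2^(n+1-A) ≤ d`, the degree of each trinomial.
-/

open Polynomial

namespace Polynomial

variable {R : Type*} [CommRing R]

theorem dickson_one_eval_add (x y : R) :
    ∀ n, (dickson 1 (x * y) n).eval (x + y) = x ^ n + y ^ n
  | 0 => by norm_num [dickson_zero]
  | 1 => by simp [dickson_one]
  | n + 2 => by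
    simp only [dickson_add_two, eval_sub, eval_mul, eval_X, eval_C,
      dickson_one_eval_add x y n, dickson_one_eval_add x y (n + 1)]
    ring

theorem natDegree_dickson_le (k : ℕ) (a : R) : ∀ n, (dickson k a n).natDegree ≤ n
  | 0 => by rw [dickson_zero]; exact (natDegree_sub_le _ _).trans (by simp)
  | 1 => by rw [dickson_one]; exact natDegree_X_le
  | n + 2 => by
    rw [dickson_add_two]
    refine (natDegree_sub_le _ _).trans (max_le ?_ ?_)
    · exact natDegree_mul_le.trans (by grind [natDegree_X_le, natDegree_dickson_le k a (n + 1)])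
    · exact (natDegree_C_mul_le _ _).trans (by grind [natDegree_dickson_le k a n])

theorem monic_dickson [Nontrivial R] (k : ℕ) (a : R) {n : ℕ} (hn : n ≠ 0) :
    (dickson k a n).Monic := by
  obtain ⟨n, rfl⟩ := Nat.exists_eq_succ_of_ne_zero hn
  suffices ∀ n, (dickson k a (n + 1)).Monic ∧ (dickson k a (n + 1)).natDegree = n + 1 from
    (this n).1
  intro n
  induction n with
  | zero => simp [dickson_one]
  | succ n ih =>
    have hlt : (C a * dickson k a n).natDegree < (X * dickson k a (n + 1)).natDegree := by
      rw [natDegree_X_mul ih.1.ne_zero, ih.2]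
      exact (natDegree_C_mul_le _ _).trans_lt ((natDegree_dickson_le k a n).trans_lt (by omega))
    rw [dickson_add_two]
    refine ⟨(monic_X.mul ih.1).sub_of_left (degree_lt_degree hlt), ?_⟩
    rw [natDegree_sub_eq_left_of_natDegree_lt hlt, natDegree_X_mul ih.1.ne_zero, ih.2]

theorem monic_X_sq_add_C_mul_X_sub_one [Nontrivial R] (δ : R) :
    (X ^ 2 + C δ * X - 1 : R[X]).Monic := by
  monicity!

theorem natDegree_X_sq_add_C_mul_X_sub_one [Nontrivial R] (δ : R) :
    (X ^ 2 + C δ * X - 1 : R[X]).natDegree = 2 := by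
  compute_degree!

end Polynomial

theorem FiniteField.mem_range_algebraMap_of_pow_card_eq {F K : Type*} [Field F] [Fintype F]
    [Field K] [Algebra F K] {x : K} (hx : x ^ Fintype.card F = x) :
    x ∈ (algebraMap F K).range := by
  have hsplits : (X ^ Fintype.card F - X : F[X]).Splits := by
    rw [splits_iff_card_roots, FiniteField.roots_X_pow_card_sub_X,
      FiniteField.X_pow_card_sub_X_natDegree_eq _ Fintype.one_lt_card]
    rfl
  refine hsplits.mem_range_of_isRoot
    (FiniteField.X_pow_card_sub_X_ne_zero F Fintype.one_lt_card) ?_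
  simp [hx]

theorem two_pow_succ_dvd_card_pow_natDegree_sub_one {F : Type*} [Field F] [Fintype F]
    (hF : ringChar F ≠ 2) {g : F[X]} (hg : Irreducible g) {N : ℕ} (hdvd : g ∣ X ^ 2 ^ N + 1) :
    2 ^ (N + 1) ∣ Fintype.card F ^ g.natDegree - 1 := by
  have := Fact.mk hg
  let pb := AdjoinRoot.powerBasis hg.ne_zero
  have : Module.Finite F (AdjoinRoot g) := pb.finite
  have : Finite (AdjoinRoot g) := Module.finite_of_finite F
  have : Fintype (AdjoinRoot g) := Fintype.ofFinite _
  have hcard : Fintype.card (AdjoinRoot g) = Fintype.card F ^ g.natDegree := by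
    rw [Module.card_eq_pow_finrank (K := F), pb.finrank, AdjoinRoot.powerBasis_dim]
  have hβ : AdjoinRoot.root g ^ 2 ^ N = -1 := by
    rw [eq_neg_iff_add_eq_zero, ← AdjoinRoot.mk_X, ← map_pow, ← map_one (AdjoinRoot.mk g),
      ← map_add, AdjoinRoot.mk_eq_zero]
    exact hdvd
  have hβ0 : AdjoinRoot.root g ≠ 0 := by
    rintro h
    simp [h] at hβ
  have hneg : (-1 : AdjoinRoot g) ≠ 1 :=
    Ring.neg_one_ne_one_of_char_ne_two (by rwa [← Algebra.ringChar_eq F])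
  have horder : orderOf (AdjoinRoot.root g) = 2 ^ (N + 1) :=
    orderOf_eq_prime_pow (by rwa [hβ]) (by rw [pow_succ, pow_mul, hβ, neg_one_sq])
  rw [← hcard, ← horder]
  exact orderOf_dvd_of_pow_eq_one (FiniteField.pow_card_sub_one_eq_one _ hβ0)

theorem two_pow_le_of_two_pow_dvd_pow_sub_one {q A m n d : ℕ} (hm : Odd m) (hA : 2 ≤ A)
    (hq : q + 1 = 2 ^ A * m) (hd : d ≠ 0) (hdvd : 2 ^ (n + 1) ∣ q ^ d - 1) :
    2 ^ (n + 1 - A) ≤ d := by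
  obtain ⟨t, ht⟩ : 4 ∣ q + 1 := hq ▸ (pow_dvd_pow 2 hA).mul_right m
  have hq1 : 1 < q := by omega
  rcases Nat.even_or_odd d with hde | hdo
  · have hlte := padicValNat.pow_two_sub_one hq1 (by omega) hd hde
    have hplus : padicValNat 2 (q + 1) = A := by
      rw [hq, padicValNat.mul (by positivity) hm.pos.ne', padicValNat.prime_pow,
        padicValNat.eq_zero_of_not_dvd (by simpa [← even_iff_two_dvd] using hm), add_zero]
    have hminus : padicValNat 2 (q - 1) = 1 := by
      rw [show q - 1 = 2 * (2 * (t - 1) + 1) by omega, padicValNat.mul two_ne_zero (by omega),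
        padicValNat.self one_lt_two, padicValNat.eq_zero_of_not_dvd (by omega)]
    have hle : n + 1 ≤ padicValNat 2 (q ^ d - 1) :=
      (padicValNat_dvd_iff_le (by have := Nat.one_lt_pow hd hq1; omega)).1 hdvd
    exact Nat.le_of_dvd (Nat.pos_of_ne_zero hd)
      ((pow_dvd_pow 2 (by omega)).trans pow_padicValNat_dvd)
  · by_contra! hlt
    have h4 : ((q ^ d - 1 : ℕ) : ZMod 4) = 0 := by
      have hexp : n + 1 - A ≠ 0 := fun h ↦ by rw [h] at hlt; omega
      rw [ZMod.natCast_eq_zero_iff]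
      exact (pow_dvd_pow 2 (by omega : 2 ≤ n + 1)).trans hdvd
    have hq4 : (q : ZMod 4) = -1 := by
      rw [eq_neg_iff_add_eq_zero, ← Nat.cast_one, ← Nat.cast_add, ht, Nat.cast_mul]
      exact zero_mul _
    rw [Nat.cast_sub (Nat.one_le_pow _ _ (by omega)), Nat.cast_pow, hq4, hdo.neg_one_pow] at h4
    exact absurd h4 (by decide)

section Dickson

variable {F : Type*} [Field F] [Fintype F] {k m : ℕ}

theorem exists_mem_roots_dickson_eq_inv_sub {K : Type*} [Field K] [Algebra F K] (hk : Even k)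
    (hm : Odd m) (hq : Fintype.card F + 1 = 2 * k * m) {z : K} (hz : z ^ (2 * k) = -1) :
    ∃ δ ∈ (dickson 1 (-1 : F) k).roots, algebraMap F K δ = z⁻¹ - z := by
  have hk0 : k ≠ 0 := by rintro rfl; simp at hq
  have hz0 : z ≠ 0 := by rintro rfl; simp [hk0] at hz
  have hzq : z ^ Fintype.card F = -z⁻¹ := by
    have : z ^ Fintype.card F * z = -1 := by rw [← pow_succ, hq, pow_mul, hz, hm.neg_one_pow]
    rw [eq_neg_iff_add_eq_zero, ← mul_left_inj' hz0]
    field_simp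
    linear_combination this
  have hfix : (z⁻¹ - z) ^ Fintype.card F = z⁻¹ - z := by
    have := map_sub (FiniteField.frobeniusAlgHom F K) z⁻¹ z
    simp only [FiniteField.coe_frobeniusAlgHom, inv_pow, hzq] at this
    rw [this]
    simp [sub_eq_add_neg, add_comm]
  obtain ⟨δ, hδ⟩ := FiniteField.mem_range_algebraMap_of_pow_card_eq hfix
  have hD : (dickson 1 (-1 : K) k).eval (z⁻¹ - z) = 0 := by
    have := dickson_one_eval_add z⁻¹ (-z) k
    rw [mul_neg, inv_mul_cancel₀ hz0, ← sub_eq_add_neg, hk.neg_pow] at this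
    rw [this, ← mul_right_inj' (pow_ne_zero k hz0), mul_add, ← mul_pow, mul_inv_cancel₀ hz0,
      ← pow_add, ← two_mul, hz]
    ring
  refine ⟨δ, (mem_roots (monic_dickson 1 _ hk0).ne_zero).2 ?_, hδ⟩
  apply (algebraMap F K).injective
  rw [map_zero, ← aeval_algebraMap_apply_eq_algebraMap_eval, ← eval_map_algebraMap, map_dickson,
    map_neg, map_one, hδ, hD]

theorem X_pow_two_mul_add_one_eq_prod_dickson_roots [DecidableEq F] (hk : Even k) (hm : Odd m)
    (hq : Fintype.card F + 1 = 2 * k * m) :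
    (X ^ (2 * k) + 1 : F[X]) =
        ∏ δ ∈ (dickson 1 (-1 : F) k).roots.toFinset, (X ^ 2 + C δ * X - 1) ∧
      (dickson 1 (-1 : F) k).roots.toFinset.card = k := by
  have hk0 : k ≠ 0 := by rintro rfl; simp at hq
  set Δ := (dickson 1 (-1 : F) k).roots.toFinset
  set G : F[X] := ∏ δ ∈ Δ, (X ^ 2 + C δ * X - 1)
  let K := AlgebraicClosure F
  set P : K[X] := X ^ (2 * k) + 1 with hP
  have hGmonic : G.Monic := monic_prod_of_monic _ _ fun δ _ ↦ monic_X_sq_add_C_mul_X_sub_one δ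
  have hGdeg : G.natDegree = 2 * Δ.card := by
    rw [natDegree_prod_of_monic _ _ fun δ _ ↦ monic_X_sq_add_C_mul_X_sub_one δ,
      Finset.sum_const_nat fun δ _ ↦ natDegree_X_sq_add_C_mul_X_sub_one δ, mul_comm]
  have hPmonic : P.Monic := by rw [hP, ← C_1]; exact monic_X_pow_add_C _ (by omega)
  have hPdeg : P.natDegree = 2 * k := by rw [hP, ← C_1, natDegree_X_pow_add_C]
  have h2k : ((2 * k : ℕ) : F) ≠ 0 := fun h ↦ by
    have := congrArg (Nat.cast : ℕ → F) hq
    rw [Nat.cast_add, FiniteField.cast_card_eq_zero, zero_add, Nat.cast_mul, h, zero_mul,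
      Nat.cast_one] at this
    exact one_ne_zero this
  have hPsep : P.Separable := by
    rw [hP, ← sub_neg_eq_add, ← C_1, ← C_neg]
    exact separable_X_pow_sub_C _ (by rwa [← map_natCast (algebraMap F K), _root_.map_ne_zero])
      (neg_ne_zero.2 one_ne_zero)
  have hdvd : P ∣ G.map (algebraMap F K) := by
    refine (IsAlgClosed.splits P).dvd_of_roots_le_roots hPmonic.ne_zero ?_
    rw [Multiset.le_iff_subset (nodup_roots hPsep)]
    intro z hz
    have hz' : z ^ (2 * k) = -1 := by
      simpa [hP, IsRoot, eq_neg_iff_add_eq_zero] using (mem_roots hPmonic.ne_zero).1 hz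
    obtain ⟨δ, hδ, hδz⟩ := exists_mem_roots_dickson_eq_inv_sub hk hm hq hz'
    have hz0 : z ≠ 0 := by rintro rfl; simp [hk0] at hz'
    rw [mem_roots (hGmonic.map _).ne_zero, IsRoot, Polynomial.map_prod, eval_prod]
    refine Finset.prod_eq_zero (Multiset.mem_toFinset.2 hδ) ?_
    simp only [eval_map_algebraMap, map_sub, map_add, map_pow, map_mul, aeval_X, aeval_C, map_one,
      hδz]
    rw [sub_mul, inv_mul_cancel₀ hz0]
    ring
  have hcard : Δ.card = k := by
    have hle : Δ.card ≤ k :=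
      (Multiset.toFinset_card_le _).trans ((card_roots' _).trans (natDegree_dickson_le 1 _ k))
    have hge := natDegree_le_of_dvd hdvd (hGmonic.map _).ne_zero
    rw [hGmonic.natDegree_map, hGdeg, hPdeg] at hge
    omega
  have hGP : G.map (algebraMap F K) = P := by
    refine eq_of_monic_of_dvd_of_natDegree_le hPmonic (hGmonic.map _) hdvd ?_
    rw [hGmonic.natDegree_map, hGdeg, hPdeg, hcard]
  refine ⟨map_injective _ (algebraMap F K).injective ?_, hcard⟩
  rw [hGP, hP]
  simp

end Dickson

theorem Polynomial.Monic.irreducible_of_forall_natDegree_le {K : Type*} [Field K] {T : K[X]}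
    (hT : T.Monic) (hdeg : T.natDegree ≠ 0)
    (h : ∀ g : K[X], Irreducible g → g ∣ T → T.natDegree ≤ g.natDegree) : Irreducible T := by
  obtain ⟨g, hgm, hg, hgT⟩ :=
    exists_monic_irreducible_factor T (not_isUnit_of_natDegree_pos _ (Nat.pos_of_ne_zero hdeg))
  rwa [eq_of_monic_of_dvd_of_natDegree_le hgm hT hgT (h g hg hgT)]

theorem irreducible_of_dvd_X_pow_two_pow_add_one {F : Type*} [Field F] [Fintype F] {A m n : ℕ}
    (hm : Odd m) (hA : 2 ≤ A) (hq : Fintype.card F + 1 = 2 ^ A * m) {T : F[X]} (hT : T.Monic)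
    (hTdeg : T.natDegree = 2 ^ (n + 1 - A)) (hdvd : T ∣ X ^ 2 ^ n + 1) : Irreducible T := by
  have hchar : ringChar F ≠ 2 := by
    rw [Ne, FiniteField.even_card_iff_char_two]
    have := (pow_dvd_pow 2 (by omega : 1 ≤ A)).mul_right m
    omega
  refine hT.irreducible_of_forall_natDegree_le (by simp [hTdeg]) fun g hg hgT ↦ ?_
  rw [hTdeg]
  exact two_pow_le_of_two_pow_dvd_pow_sub_one hm hA hq hg.natDegree_pos.ne'
    (two_pow_succ_dvd_card_pow_natDegree_sub_one hchar hg (hgT.trans hdvd))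

theorem pow_two_pow_add_one_factorization_case_b_general
    {q A m : ℕ} (F : Type*) [Field F] [Fintype F] [DecidableEq F]
    (hcard : Fintype.card F = q)
    (hm : Odd m) (hA : 2 ≤ A) (hq : q = 2 ^ A * m - 1)
    (n : ℕ) (hn : A ≤ n) :
    ∀ Δ : Finset F, Δ = (Polynomial.dickson 1 (-1 : F) (2 ^ (A - 1))).roots.toFinset →
      ((X ^ (2 ^ n) + 1 : F[X]) =
        ∏ δ ∈ Δ, (X ^ (2 ^ (n - A + 1)) + C δ * X ^ (2 ^ (n - A)) - 1)) ∧
      (∀ δ ∈ Δ, Irreducible (X ^ (2 ^ (n - A + 1)) + C δ * X ^ (2 ^ (n - A)) - 1 : F[X])) ∧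
      Δ.card = 2 ^ (A - 1) := by
  rintro Δ rfl
  have hq' : Fintype.card F + 1 = 2 ^ A * m := by
    have := Nat.mul_pos (Nat.two_pow_pos A) hm.pos
    omega
  have hA' : 2 ^ A = 2 * 2 ^ (A - 1) := by rw [← pow_succ']; congr 1; omega
  obtain ⟨hprod, hΔcard⟩ := X_pow_two_mul_add_one_eq_prod_dickson_roots (k := 2 ^ (A - 1))
    (Nat.even_pow.2 ⟨even_two, by omega⟩) hm (by rw [hq', hA'])
  have hsubst (δ : F) : (X ^ 2 + C δ * X - 1).comp (X ^ 2 ^ (n - A)) =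
      X ^ 2 ^ (n - A + 1) + C δ * X ^ 2 ^ (n - A) - 1 := by
    rw [sub_comp, add_comp, mul_comp, C_comp, X_pow_comp, X_comp, one_comp, ← pow_mul, ← pow_succ]
  have hfactor : (X ^ 2 ^ n + 1 : F[X]) =
      ∏ δ ∈ (dickson 1 (-1 : F) (2 ^ (A - 1))).roots.toFinset,
        (X ^ 2 ^ (n - A + 1) + C δ * X ^ 2 ^ (n - A) - 1) := by
    have := congrArg (comp · (X ^ 2 ^ (n - A) : F[X])) hprod
    simp only [prod_comp, hsubst] at this
    rw [← this, add_comp, one_comp, X_pow_comp, ← pow_mul, ← hA', ← pow_add,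
      Nat.sub_add_cancel hn]
  refine ⟨hfactor, fun δ hδ ↦ ?_, hΔcard⟩
  rw [← hsubst]
  refine irreducible_of_dvd_X_pow_two_pow_add_one hm hA hq'
    ((monic_X_sq_add_C_mul_X_sub_one δ).comp (monic_X_pow _) (by simp)) ?_
    (hsubst δ ▸ hfactor ▸ Finset.dvd_prod_of_mem _ hδ)
  rw [natDegree_comp, natDegree_X_pow, natDegree_X_sq_add_C_mul_X_sub_one,
    show n + 1 - A = n - A + 1 by omega, pow_succ']

/-- Factorization of `x^(2^n) + 1` over `F_q`, `q ≡ 3 (mod 4)`, `q = 2^A·m − 1` with `m`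
odd and `A ≥ 2`, in the range `n ≥ A`: it is the product of the `2^(A-1)` irreducible
trinomials `x^(2^(n-A+1)) + δ·x^(2^(n-A)) − 1` where `δ` runs over the set `Δ` of roots
in `F_q` of the Dickson polynomial (of the first kind) `D_{2^(A-1)}(x, −1)`. -/
theorem pow_two_pow_add_one_factorization_case_b
    {q A m : ℕ} (F : Type*) [Field F] [Fintype F] [DecidableEq F]
    (hcard : Fintype.card F = q) (hq3 : q % 4 = 3)
    (hm : Odd m) (hA : 2 ≤ A) (hq : q = 2 ^ A * m - 1)
    (n : ℕ) (hn : A ≤ n) :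
    ∀ Δ : Finset F, Δ = (Polynomial.dickson 1 (-1 : F) (2 ^ (A - 1))).roots.toFinset →
      ((X ^ (2 ^ n) + 1 : F[X]) =
        ∏ δ ∈ Δ, (X ^ (2 ^ (n - A + 1)) + C δ * X ^ (2 ^ (n - A)) - 1)) ∧
      (∀ δ ∈ Δ, Irreducible (X ^ (2 ^ (n - A + 1)) + C δ * X ^ (2 ^ (n - A)) - 1 : F[X])) ∧
      Δ.card = 2 ^ (A - 1) :=
  pow_two_pow_add_one_factorization_case_b_general F hcard hm hA hq n hn
end

section
/- For every integer n ≥ 2, over the field F_5 one has the factorization x^{2^n} + 1 = (x^{2^{n−1}} + 2)·(x^{2^{n−1}} + 3), and both factors are irreducible over F_5. -/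
/-!
Since `5 = 1 + 4 · odd`, squaring shows `5 ^ 2 ^ j = 1 + 2 ^ (j + 2) · odd`, so `5` has
multiplicative order `2 ^ m` modulo `2 ^ (m + 2)`. Over a finite field of characteristic `p`,
every irreducible factor of the cyclotomic polynomial `Φ_N = X ^ (N / 2) + 1` (`N = 2 ^ (m + 2)`)
has degree the order of `p` modulo `N`; hence for `p = 5` any factor of degree `2 ^ m` is
irreducible. In characteristic `5`, `y ^ 2 + 1 = (y + 2) (y + 3)` with `y = X ^ 2 ^ m` exhibits
two such factors.
-/

open Polynomial

theorem Nat.exists_odd_pow_two_pow_eq_one_add {a : ℕ} (ha : a % 8 = 5) (j : ℕ) :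
    ∃ v, Odd v ∧ a ^ 2 ^ j = 1 + 2 ^ (j + 2) * v := by
  induction j with
  | zero => exact ⟨a / 4, by rw [Nat.odd_iff]; omega, by rw [pow_zero, pow_one]; omega⟩
  | succ j ih =>
    obtain ⟨v, hv, h⟩ := ih
    refine ⟨v + 2 ^ (j + 1) * v ^ 2, hv.add_even (by simp [pow_succ]), ?_⟩
    rw [pow_succ, pow_mul, h]
    ring

theorem ZMod.pow_two_pow_eq_one_iff {a : ℕ} (ha : a % 8 = 5) (m j : ℕ) :
    (a : ZMod (2 ^ (m + 2))) ^ 2 ^ j = 1 ↔ m ≤ j := by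
  obtain ⟨v, hv, h⟩ := Nat.exists_odd_pow_two_pow_eq_one_add ha j
  rw [← Nat.cast_pow, h, Nat.cast_add, Nat.cast_one, add_eq_left,
    ZMod.natCast_eq_zero_iff, ((Nat.coprime_two_left.2 hv).pow_left _).dvd_mul_right,
    Nat.pow_dvd_pow_iff_le_right one_lt_two, Nat.add_le_add_iff_right]

theorem ZMod.orderOf_natCast_eq_two_pow {a : ℕ} (ha : a % 8 = 5) (m : ℕ) :
    orderOf (a : ZMod (2 ^ (m + 2))) = 2 ^ m := by
  obtain ⟨i, hi, hord⟩ := (Nat.dvd_prime_pow Nat.prime_two).1 <|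
    orderOf_dvd_of_pow_eq_one ((ZMod.pow_two_pow_eq_one_iff ha m m).2 le_rfl)
  have hmi : m ≤ i := (ZMod.pow_two_pow_eq_one_iff ha m i).1 (hord ▸ pow_orderOf_eq_one _)
  rw [hord, le_antisymm hi hmi]

theorem Polynomial.cyclotomic_two_pow_succ (R : Type*) [CommRing R] (m : ℕ) :
    cyclotomic (2 ^ (m + 1)) R = X ^ 2 ^ m + 1 := by
  rw [cyclotomic_prime_pow_eq_geom_sum Nat.prime_two, Finset.sum_range_succ,
    Finset.sum_range_one, pow_zero, pow_one, add_comm]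

theorem ZMod.irreducible_of_dvd_X_pow_two_pow_add_one {p : ℕ} [Fact p.Prime] (hp : p % 8 = 5)
    {m : ℕ} {P : (ZMod p)[X]} (hP : P ∣ X ^ 2 ^ (m + 1) + 1) (hdeg : P.natDegree = 2 ^ m) :
    Irreducible P := by
  have hpn : ¬p ∣ 2 ^ (m + 2) := fun h ↦ by
    have := Nat.le_of_dvd two_pos ((Fact.out : p.Prime).dvd_of_dvd_pow h)
    omega
  refine ZMod.irreducible_of_dvd_cyclotomic_of_natDegree hpn ?_ ?_
  · rwa [cyclotomic_two_pow_succ]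
  · rw [← orderOf_units, ZMod.coe_unitOfCoprime, ZMod.orderOf_natCast_eq_two_pow hp, hdeg]

theorem sq_add_one_eq_mul_of_charP_five {R : Type*} [CommRing R] [CharP R 5] (y : R) :
    y ^ 2 + 1 = (y + 2) * (y + 3) := by
  linear_combination (-y - 1) * CharP.cast_eq_zero R 5

/-- Over `F_5`, for `n ≥ 2`:
`x^(2^n) + 1 = (x^(2^(n-1)) + 2) (x^(2^(n-1)) + 3)`, and both factors are irreducible. -/
theorem pow_two_pow_add_one_factorization_F5 (n : ℕ) (hn : 2 ≤ n) :
    ((X ^ (2 ^ n) + 1 : (ZMod 5)[X]) =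
        (X ^ (2 ^ (n - 1)) + 2) * (X ^ (2 ^ (n - 1)) + 3)) ∧
      Irreducible (X ^ (2 ^ (n - 1)) + 2 : (ZMod 5)[X]) ∧
      Irreducible (X ^ (2 ^ (n - 1)) + 3 : (ZMod 5)[X]) := by
  obtain ⟨m, rfl⟩ : ∃ m, n = m + 1 := ⟨n - 1, by omega⟩
  rw [Nat.add_sub_cancel]
  have : Fact (Nat.Prime 5) := ⟨by norm_num⟩
  have hfactor : (X ^ 2 ^ (m + 1) + 1 : (ZMod 5)[X]) = (X ^ 2 ^ m + 2) * (X ^ 2 ^ m + 3) := by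
    rw [pow_succ, pow_mul, sq_add_one_eq_mul_of_charP_five]
  refine ⟨hfactor, ?_, ?_⟩
  · exact ZMod.irreducible_of_dvd_X_pow_two_pow_add_one (by norm_num) (hfactor ▸ dvd_mul_right _ _)
      (by rw [← C_ofNat, natDegree_X_pow_add_C])
  · exact ZMod.irreducible_of_dvd_X_pow_two_pow_add_one (by norm_num) (hfactor ▸ dvd_mul_left _ _)
      (by rw [← C_ofNat, natDegree_X_pow_add_C])
end

section
/- Let q be an odd prime power and n a power of 2 such that x^n + 1 = h'(x)·h''(x) over F_q with h', h'' distinct monic irreducible polynomials of degree n/2, each the reciprocal of the other. Let u ∈ F_q^{2n} be a nonzero vector of Hamming weight < n. Then there is at most one element a of R = F_q[x]/(x^n + 1) such that u ∈ C_a and C_a is self-dual. -/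
open Polynomial

/-- The `n × n` negacirculant matrix with first row `a`. -/
def negacirculantMatrix {F : Type*} [Ring F] {n : ℕ} (a : Fin n → F) :
    Matrix (Fin n) (Fin n) F :=
  Matrix.of fun i j => if (i : ℕ) ≤ (j : ℕ) then a (j - i) else - a (j - i)

/-- The monic reciprocal polynomial of `h` (for `h` with `h 0 ≠ 0`). -/
noncomputable def recip {F : Type*} [Field F] (h : F[X]) : F[X] :=
  C (h.coeff 0)⁻¹ * h.reverse

/-!
Identify `a`, `b` with `α`, `β` in `R = F[x]/(x^n + 1)` and let `τ` be the involution
`c(x) ↦ c(x⁻¹)`. Self-duality of `C_a` says `α · τ α = -1`, and `u ∈ C_a ∩ C_b` gives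
`c · (α - β) = 0` with `c ≠ 0`. So `d = α - β` is a zero divisor, hence divisible by `h'` or
`h''`, and `τ d = τ α · τ β · d` is a multiple of `d`. As `h''` is the reciprocal of `h'`,
`τ` exchanges the ideals `(h')` and `(h'')`, so `τ d ∈ (h') ∩ (h'') = 0` and `d = 0`.
-/

namespace AdjoinRoot

variable {R : Type*} [CommRing R] {f p q : R[X]}

theorem eq_zero_of_mk_dvd_of_mk_dvd (hf : f = p * q) (hpq : IsCoprime p q) {x : AdjoinRoot f}
    (hp : mk f p ∣ x) (hq : mk f q ∣ x) : x = 0 := by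
  obtain ⟨a, b, hab⟩ := hpq
  obtain ⟨y, rfl⟩ := hp
  obtain ⟨z, hz⟩ := hq
  have hab' : mk f a * mk f p + mk f b * mk f q = 1 := by
    rw [← map_mul, ← map_mul, ← map_add, hab, map_one]
  have hpq0 : mk f p * mk f q = 0 := by rw [← map_mul, ← hf, mk_self]
  linear_combination (-(mk f p * y)) * hab' + mk f a * mk f p * hz
    + (mk f a * z + mk f b * y) * hpq0

theorem mk_dvd_or_mk_dvd_of_mul_eq_zero (hf : f = p * q) (hp : Prime p) (hq : Prime q)
    (hpq : IsCoprime p q) {x y : AdjoinRoot f} (hx : x ≠ 0) (hxy : x * y = 0) :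
    mk f p ∣ y ∨ mk f q ∣ y := by
  obtain ⟨x, rfl⟩ := mk_surjective x
  obtain ⟨y, rfl⟩ := mk_surjective y
  rw [← map_mul, mk_eq_zero] at hxy
  by_contra! hy
  have hpx : p ∣ x := ((hp.dvd_or_dvd ((Dvd.intro q hf.symm).trans hxy)).resolve_right
    fun h => hy.1 (map_dvd _ h))
  have hqx : q ∣ x := ((hq.dvd_or_dvd ((Dvd.intro_left p hf.symm).trans hxy)).resolve_right
    fun h => hy.2 (map_dvd _ h))
  exact hx (mk_eq_zero.mpr (hf ▸ hpq.mul_dvd hpx hqx))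

end AdjoinRoot

abbrev NegacyclicRing (R : Type*) [CommRing R] (n : ℕ) := AdjoinRoot (X ^ n + 1 : R[X])

namespace NegacyclicRing

open AdjoinRoot Matrix

variable {R : Type*} [CommRing R] {n : ℕ}

local notation "ρ" => AdjoinRoot.root (X ^ n + 1 : R[X])

theorem root_pow : ρ ^ n = -1 := by
  have h := mk_self (f := (X ^ n + 1 : R[X]))
  rw [map_add, map_pow, mk_X, map_one] at h
  exact eq_neg_of_add_eq_zero_left h

-- `↑i ≤ ↑(i + k)` says that `i + k` does not wrap around modulo `n`; a wrap costs `x^n = -1`.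
theorem root_pow_val_add (i k : Fin n) :
    ρ ^ ((i + k : Fin n) : ℕ) =
      (if (i : ℕ) ≤ (i + k : Fin n) then 1 else -1) * (ρ ^ (i : ℕ) * ρ ^ (k : ℕ)) := by
  rw [← pow_add, Fin.val_add_eq_ite]
  split_ifs with hwrap
  · omega
  · have := pow_sub_mul_pow ρ hwrap
    rw [root_pow] at this
    linear_combination -this
  · simp
  · omega

noncomputable def ofCoeffs : (Fin n → R) →ₗ[R] NegacyclicRing R n :=
  Fintype.linearCombination R fun i => ρ ^ (i : ℕ)

theorem ofCoeffs_apply (v : Fin n → R) : ofCoeffs v = ∑ i, v i • ρ ^ (i : ℕ) :=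
  Fintype.linearCombination_apply R _ v

theorem ofCoeffs_injective [Nontrivial R] [NeZero n] :
    Function.Injective (ofCoeffs : (Fin n → R) → NegacyclicRing R n) := by
  have hdeg : (X ^ n + 1 : R[X]).natDegree = n := by
    rw [← C_1, natDegree_X_pow_add_C]
  have hmon : (X ^ n + 1 : R[X]).Monic := by
    rw [← C_1]; exact monic_X_pow_add_C 1 (NeZero.ne n)
  have hli : LinearIndependent R fun i : Fin n => ρ ^ (i : ℕ) := by
    have := (powerBasis' hmon).basis.linearIndependent.comp (Fin.cast hdeg.symm)
      (Fin.cast_injective _)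
    simp only [Function.comp_def, PowerBasis.coe_basis, powerBasis'_gen] at this
    exact this
  exact hli.fintypeLinearCombination_injective

theorem ofCoeffs_negacirculantMatrix [NeZero n] (a : Fin n → R) (i : Fin n) :
    ofCoeffs (negacirculantMatrix a i) = ρ ^ (i : ℕ) * ofCoeffs a := by
  rw [ofCoeffs_apply, ofCoeffs_apply, Finset.mul_sum]
  refine (Fintype.sum_equiv (Equiv.addLeft i) _ _ fun k => ?_).symm
  simp only [Equiv.coe_addLeft, negacirculantMatrix, of_apply, add_sub_cancel_left,
    root_pow_val_add i k]
  split_ifs <;> simp only [Algebra.smul_def, neg_mul, one_mul, map_neg, mul_neg, neg_neg] <;> ring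

theorem ofCoeffs_vecMul (c : Fin n → R) (M : Matrix (Fin n) (Fin n) R)
    (y : NegacyclicRing R n) (hM : ∀ i, ofCoeffs (M i) = ρ ^ (i : ℕ) * y) :
    ofCoeffs (c ᵥ* M) = ofCoeffs c * y := by
  simp only [vecMul_eq_sum, map_sum, map_smul, hM, ofCoeffs_apply, Finset.sum_mul,
    smul_mul_assoc]

theorem ofCoeffs_vecMul_negacirculantMatrix [NeZero n] (c a : Fin n → R) :
    ofCoeffs (c ᵥ* negacirculantMatrix a) = ofCoeffs c * ofCoeffs a :=
  ofCoeffs_vecMul c _ _ (ofCoeffs_negacirculantMatrix a)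

section Conj

variable [NeZero n]

theorem neg_root_pow_pred_mul_root : -ρ ^ (n - 1) * ρ = 1 := by
  rw [neg_mul, ← pow_succ, Nat.sub_add_cancel NeZero.one_le, root_pow, neg_neg]

/-- `-x ^ (n - 1)` is `x⁻¹`, so `conj` is the involution `c(x) ↦ c(x⁻¹)`. -/
noncomputable def conj : NegacyclicRing R n →ₐ[R] NegacyclicRing R n :=
  liftAlgHom _ (Algebra.ofId R _) (-ρ ^ (n - 1)) <| by
    have hinv := congrArg (· ^ n) (neg_root_pow_pred_mul_root (R := R) (n := n))
    simp only [mul_pow, one_pow, root_pow] at hinv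
    simp only [eval₂_add, eval₂_X_pow, eval₂_one]
    linear_combination -hinv

theorem conj_root : conj ρ = -ρ ^ (n - 1) := liftAlgHom_root _ _ _ _

theorem conj_root_mul_root : conj ρ * ρ = 1 := by
  rw [conj_root, neg_root_pow_pred_mul_root]

theorem conj_conj (x : NegacyclicRing R n) : conj (conj x) = x := by
  suffices h : conj.comp conj = AlgHom.id R (NegacyclicRing R n) from AlgHom.congr_fun h x
  refine algHom_ext ?_
  have h := congrArg conj (conj_root_mul_root (R := R) (n := n))
  rw [map_mul, map_one] at h
  simpa using left_inv_eq_right_inv h conj_root_mul_root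

theorem conj_mk (p : R[X]) :
    conj (mk (X ^ n + 1) p) = mk (X ^ n + 1) p.reverse * conj ρ ^ p.natDegree := by
  let _ : Invertible (conj ρ) :=
    ⟨ρ, mul_comm ρ (conj ρ) ▸ conj_root_mul_root, conj_root_mul_root⟩
  rw [← aeval_eq p, ← aeval_algHom_apply, ← aeval_eq p.reverse, aeval_def, aeval_def]
  exact (eval₂_reflect_mul_pow _ (conj ρ) _ p le_rfl).symm

theorem associated_conj_mk_mk_reverse (p : R[X]) :
    Associated (conj (mk (X ^ n + 1) p)) (mk (X ^ n + 1) p.reverse) := by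
  rw [conj_mk]
  exact associated_mul_unit_left _ _ ((IsUnit.of_mul_eq_one _ conj_root_mul_root).pow _)

theorem conj_ofCoeffs (v : Fin n → R) :
    conj (ofCoeffs v) = ∑ i, v i • conj ρ ^ (i : ℕ) := by
  simp only [ofCoeffs_apply, map_sum, map_smul, map_pow]

theorem ofCoeffs_negacirculantMatrix_transpose (a : Fin n → R) (i : Fin n) :
    ofCoeffs ((negacirculantMatrix a)ᵀ i) = ρ ^ (i : ℕ) * conj (ofCoeffs a) := by
  rw [ofCoeffs_apply, conj_ofCoeffs, Finset.mul_sum]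
  refine (Fintype.sum_equiv (Equiv.subLeft i) _ _ fun k => ?_).symm
  have hwrap := root_pow_val_add (R := R) (i - k) k
  have hinv : conj ρ ^ (k : ℕ) * ρ ^ (k : ℕ) = 1 := by
    rw [← mul_pow, conj_root_mul_root, one_pow]
  rw [sub_add_cancel] at hwrap
  simp only [Equiv.subLeft_apply, transpose_apply, negacirculantMatrix, of_apply, sub_sub_cancel,
    Algebra.smul_def] at hwrap ⊢
  split_ifs at hwrap ⊢
  · linear_combination (algebraMap R _ (a k) * conj ρ ^ (k : ℕ)) * hwrap
      + algebraMap R _ (a k) * ρ ^ ((i - k : Fin n) : ℕ) * hinv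
  · rw [map_neg]
    linear_combination (algebraMap R _ (a k) * conj ρ ^ (k : ℕ)) * hwrap
      - algebraMap R _ (a k) * ρ ^ ((i - k : Fin n) : ℕ) * hinv

theorem ofCoeffs_mul_conj_eq_neg_one {a : Fin n → R}
    (ha : negacirculantMatrix a * (negacirculantMatrix a)ᵀ = -1) :
    ofCoeffs a * conj (ofCoeffs a) = -1 := by
  have h := congrArg (fun M => ofCoeffs (M 0)) ha
  simp only [mul_apply_eq_vecMul] at h
  rw [ofCoeffs_vecMul _ _ _ (ofCoeffs_negacirculantMatrix_transpose a),
    ofCoeffs_negacirculantMatrix] at h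
  simpa [ofCoeffs_apply, one_apply] using h

theorem dvd_conj_sub {x y : NegacyclicRing R n} (hx : x * conj x = -1) (hy : y * conj y = -1) :
    x - y ∣ conj (x - y) :=
  Dvd.intro_left (conj x * conj y) <| by
    rw [map_sub]
    linear_combination conj y * hx - conj x * hy

theorem eq_zero_of_mk_dvd_of_dvd_conj {p q : R[X]} (hf : X ^ n + 1 = p * q)
    (hpq : IsCoprime p q) (hswap : mk (X ^ n + 1) q ∣ conj (mk (X ^ n + 1) p))
    {d : NegacyclicRing R n} (hd : d ∣ conj d) (hpd : mk (X ^ n + 1) p ∣ d) : d = 0 := by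
  have h : conj d = 0 :=
    eq_zero_of_mk_dvd_of_mk_dvd hf hpq (hpd.trans hd) (hswap.trans (map_dvd conj hpd))
  rw [← conj_conj d, h, map_zero]

theorem eq_zero_of_dvd_conj {p q : R[X]} (hf : X ^ n + 1 = p * q) (hp : Prime p) (hq : Prime q)
    (hpq : IsCoprime p q) (hswap : Associated (conj (mk (X ^ n + 1) p)) (mk (X ^ n + 1) q))
    {c d : NegacyclicRing R n} (hc : c ≠ 0) (hcd : c * d = 0) (hd : d ∣ conj d) : d = 0 := by
  have hswap' : mk (X ^ n + 1) p ∣ conj (mk (X ^ n + 1) q) := by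
    simpa only [conj_conj] using (hswap.map conj).dvd
  rcases mk_dvd_or_mk_dvd_of_mul_eq_zero hf hp hq hpq hc hcd with hpd | hqd
  · exact eq_zero_of_mk_dvd_of_dvd_conj hf hpq hswap.symm.dvd hd hpd
  · exact eq_zero_of_mk_dvd_of_dvd_conj (hf.trans (mul_comm p q)) hpq.symm hswap' hd hqd

end Conj

end NegacyclicRing

theorem Polynomial.associated_reverse_recip {F : Type*} [Field F] {p : F[X]}
    (hp : recip p ≠ 0) :
    Associated p.reverse (recip p) := by
  have h0 : p.coeff 0 ≠ 0 := fun h => hp (by simp [recip, h])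
  exact (associated_unit_mul_left _ _ (isUnit_C.mpr (inv_ne_zero h0).isUnit)).symm

open NegacyclicRing

theorem selfDual_code_through_low_weight_vector_unique_general
    {n : ℕ} (F : Type*) [Field F]
    (h' h'' : F[X]) (hne : h' ≠ h'') (hmon' : h'.Monic) (hmon'' : h''.Monic)
    (hirr' : Irreducible h') (hirr'' : Irreducible h'')
    (hrec : h'' = recip h')
    (hfact : (X ^ n + 1 : F[X]) = h' * h'')
    (u : Fin n ⊕ Fin n → F) (hu : u ≠ 0) :
    ∀ a b : Fin n → F,
      ((∃ c : Fin n → F, u = Sum.elim c (Matrix.vecMul c (negacirculantMatrix a))) ∧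
        negacirculantMatrix a * (negacirculantMatrix a).transpose = -1) →
      ((∃ c : Fin n → F, u = Sum.elim c (Matrix.vecMul c (negacirculantMatrix b))) ∧
        negacirculantMatrix b * (negacirculantMatrix b).transpose = -1) →
      a = b := by
  rintro a b ⟨⟨c, rfl⟩, ha⟩ ⟨⟨c', hcb⟩, hb⟩
  obtain ⟨rfl, hcab⟩ := Sum.elim_eq_iff.mp hcb
  have : NeZero n := ⟨by
    have h := congrArg natDegree hfact
    rw [← C_1, natDegree_X_pow_add_C, hmon'.natDegree_mul hmon''] at h
    have := hirr'.natDegree_pos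
    omega⟩
  have hc : ofCoeffs c ≠ 0 := fun h => hu <| by
    rw [ofCoeffs_injective (h.trans (map_zero _).symm)]
    simp
  have hcd : ofCoeffs c * (ofCoeffs a - ofCoeffs b) = 0 := by
    rw [mul_sub, sub_eq_zero, ← ofCoeffs_vecMul_negacirculantMatrix,
      ← ofCoeffs_vecMul_negacirculantMatrix, hcab]
  have hcop : IsCoprime h' h'' := hirr'.coprime_iff_not_dvd.mpr fun hdvd =>
    hne (eq_of_monic_of_associated hmon' hmon'' (hirr'.associated_of_dvd hirr'' hdvd))
  have hswap : Associated (conj (AdjoinRoot.mk (X ^ n + 1 : F[X]) h'))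
      (AdjoinRoot.mk (X ^ n + 1 : F[X]) h'') := by
    rw [hrec]
    exact (associated_conj_mk_mk_reverse h').trans
      ((associated_reverse_recip (hrec ▸ hmon''.ne_zero)).map _)
  have hd := eq_zero_of_dvd_conj hfact hirr'.prime hirr''.prime hcop hswap hc hcd
    (dvd_conj_sub (ofCoeffs_mul_conj_eq_neg_one ha) (ofCoeffs_mul_conj_eq_neg_one hb))
  exact ofCoeffs_injective (sub_eq_zero.mp hd)

/-- Suppose `n` is a power of `2` and `x^n + 1 = h' · h''` over `F_q` with `h', h''`
distinct monic irreducible polynomials of degree `n/2` that are reciprocals of each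
other. If `u ∈ F_q^(2n)` is nonzero of Hamming weight `< n`, then there is at most one
`a` (identified with its first row `a : Fin n → F_q`) such that `u` lies in the double
negacirculant code `C_a = {(c, c·a) : c ∈ R}` and `C_a` is self-dual
(i.e. `A Aᵀ = −1` for the negacirculant matrix `A` of `a`). -/
theorem selfDual_code_through_low_weight_vector_unique
    {q n : ℕ} (F : Type*) [Field F] [Fintype F] [DecidableEq F]
    (hcard : Fintype.card F = q) (hodd : Odd q) (hn : ∃ k : ℕ, n = 2 ^ k)
    (h' h'' : F[X]) (hne : h' ≠ h'') (hmon' : h'.Monic) (hmon'' : h''.Monic)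
    (hirr' : Irreducible h') (hirr'' : Irreducible h'')
    (hdeg' : h'.natDegree = n / 2) (hdeg'' : h''.natDegree = n / 2)
    (hrec : h'' = recip h')
    (hfact : (X ^ n + 1 : F[X]) = h' * h'')
    (u : Fin n ⊕ Fin n → F) (hu : u ≠ 0) (hwt : hammingNorm u < n) :
    ∀ a b : Fin n → F,
      ((∃ c : Fin n → F, u = Sum.elim c (Matrix.vecMul c (negacirculantMatrix a))) ∧
        negacirculantMatrix a * (negacirculantMatrix a).transpose = -1) →
      ((∃ c : Fin n → F, u = Sum.elim c (Matrix.vecMul c (negacirculantMatrix b))) ∧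
        negacirculantMatrix b * (negacirculantMatrix b).transpose = -1) →
      a = b :=
  selfDual_code_through_low_weight_vector_unique_general F h' h'' hne hmon' hmon'' hirr' hirr'' hrec
    hfact u hu
end
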